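/- arXiv:2009.06331 — 6 statements merged into one kernel-verified Lean document; each statement's English description precedes it below -/
import Mathlib

section
/- If a digraph D contains a spanning subdigraph that is strong and bipartite, then the proper connection number of D is at most 2. -/
/-!
Common definitions: digraphs as adjacency relations, directed walks and paths,
arc-colourings, proper connection and proper-walk connection numbers,
strong digraphs, bipartite digraphs, Hamiltonian cycles, chords,
circulant digraphs and strong 2-partitions.
-/

namespace PCDigraph

variable {V : Type*}

/-- A directed walk from `u` to `v` in the digraph with adjacency relation `Adj`. -/
inductive DWalk (Adj : V → V → Prop) : V → V → Type _
  | nil {v : V} : DWalk Adj v v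
  | cons {u v w : V} (h : Adj u v) (p : DWalk Adj v w) : DWalk Adj u w

namespace DWalk

variable {Adj : V → V → Prop}

/-- The list of arcs of a directed walk. -/
def arcs : ∀ {u v : V}, DWalk Adj u v → List (V × V)
  | _, _, .nil => []
  | u, _, .cons (v := w) _ p => (u, w) :: p.arcs

/-- The list of vertices visited by a directed walk. -/
def support : ∀ {u v : V}, DWalk Adj u v → List V
  | u, _, .nil => [u]
  | u, _, .cons _ p => u :: p.support

/-- A directed walk is a (directed) path if it visits no vertex twice. -/
def IsPath {u v : V} (p : DWalk Adj u v) : Prop := p.support.Nodup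

end DWalk

/-- A directed walk is properly coloured under the arc-colouring `c` if no two
consecutive arcs of the walk receive the same colour. -/
def ProperlyColoured {Adj : V → V → Prop} (c : V → V → ℕ) {u v : V}
    (p : DWalk Adj u v) : Prop :=
  (p.arcs.map fun e => c e.1 e.2).Chain' (· ≠ ·)

/-- `c` is an arc-colouring using colours in `{1, …, k}` that makes the digraph
properly connected: between every ordered pair of distinct vertices there is a
properly coloured directed path. -/
def IsPCColouring (Adj : V → V → Prop) (k : ℕ) (c : V → V → ℕ) : Prop :=
  (∀ u v : V, Adj u v → c u v ∈ Finset.Icc 1 k) ∧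
    ∀ u v : V, u ≠ v → ∃ p : DWalk Adj u v, p.IsPath ∧ ProperlyColoured c p

/-- `c` is an arc-colouring using colours in `{1, …, k}` that makes the digraph
properly-walk connected: between every ordered pair of distinct vertices there
is a properly coloured directed walk. -/
def IsWCColouring (Adj : V → V → Prop) (k : ℕ) (c : V → V → ℕ) : Prop :=
  (∀ u v : V, Adj u v → c u v ∈ Finset.Icc 1 k) ∧
    ∀ u v : V, u ≠ v → ∃ p : DWalk Adj u v, ProperlyColoured c p

/-- The proper connection number of a digraph. -/
noncomputable def pc (Adj : V → V → Prop) : ℕ :=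
  sInf {k : ℕ | ∃ c : V → V → ℕ, IsPCColouring Adj k c}

/-- The proper-walk connection number of a digraph. -/
noncomputable def wc (Adj : V → V → Prop) : ℕ :=
  sInf {k : ℕ | ∃ c : V → V → ℕ, IsWCColouring Adj k c}

/-- A digraph is strong if for every ordered pair of vertices there is a
directed path from the first to the second. -/
def Strong (Adj : V → V → Prop) : Prop :=
  ∀ u v : V, ∃ p : DWalk Adj u v, p.IsPath

/-- A digraph is bipartite if its vertex set can be partitioned into two sets
such that every arc joins vertices from different sets. -/
def Bipartite (Adj : V → V → Prop) : Prop :=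
  ∃ V₁ V₂ : Set V, V₁ ∪ V₂ = Set.univ ∧ Disjoint V₁ V₂ ∧
    ∀ u v : V, Adj u v → (u ∈ V₁ ∧ v ∈ V₂) ∨ (u ∈ V₂ ∧ v ∈ V₁)

/-- The out-degree of a vertex: the number of arcs with tail at that vertex. -/
noncomputable def outDeg (Adj : V → V → Prop) (v : V) : ℕ := {w | Adj v w}.ncard

/-- The in-degree of a vertex: the number of arcs with head at that vertex. -/
noncomputable def inDeg (Adj : V → V → Prop) (v : V) : ℕ := {w | Adj w v}.ncard

/-- `x` enumerates a Hamiltonian cycle of the digraph: it is a bijective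
enumeration of the vertices, consecutive vertices (cyclically) being joined
by an arc. -/
def IsHamCycle [Fintype V] (Adj : V → V → Prop)
    (x : ZMod (Fintype.card V) → V) : Prop :=
  Function.Bijective x ∧ ∀ i : ZMod (Fintype.card V), Adj (x i) (x (i + 1))

/-- A digraph is Hamiltonian if it has a Hamiltonian cycle. -/
def Hamiltonian [Fintype V] (Adj : V → V → Prop) : Prop :=
  ∃ x : ZMod (Fintype.card V) → V, IsHamCycle Adj x

/-- For a Hamiltonian cycle enumerated by `x`, the arc `x p → x q` is a chord
if it is not an arc of the cycle, i.e. `q ≠ p + 1`. -/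
def IsChord [Fintype V] (Adj : V → V → Prop)
    (x : ZMod (Fintype.card V) → V) (p q : ZMod (Fintype.card V)) : Prop :=
  Adj (x p) (x q) ∧ q ≠ p + 1

/-- The length of the chord from `x p` to `x q`: the length of the directed
path from `x p` to `x q` along the cycle. -/
def chordLength [Fintype V] (p q : ZMod (Fintype.card V)) : ℕ := (q - p).val

/-- The circulant digraph `C_n(S)`, with vertex set `ZMod n` and an arc from
`i` to `j` whenever `j - i ≡ s (mod n)` for some `s ∈ S`. -/
def circulantAdj (n : ℕ) (S : Finset ℕ) : ZMod n → ZMod n → Prop :=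
  fun i j => ∃ s ∈ S, j - i = (s : ZMod n)

/-- A strong 2-partition of a digraph: a partition of the vertex set into two
parts such that the spanning bipartite subdigraph induced by the arcs having
one end in each part is strong. -/
def HasStrongTwoPartition (Adj : V → V → Prop) : Prop :=
  ∃ V₁ V₂ : Set V, V₁ ∪ V₂ = Set.univ ∧ Disjoint V₁ V₂ ∧
    Strong (fun u v => Adj u v ∧ ((u ∈ V₁ ∧ v ∈ V₂) ∨ (u ∈ V₂ ∧ v ∈ V₁)))

end PCDigraph

/-!
Colour every arc of `D` by the side of the bipartition containing its tail. Along a walk in the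
strong bipartite spanning subdigraph the tails of consecutive arcs lie on opposite sides, so every
such walk is properly coloured; in particular the paths witnessing strong connectivity are properly
coloured paths of `D`.
-/

namespace PCDigraph

variable {V : Type*} {Adj Adj' : V → V → Prop}

namespace DWalk

def mapLe (h : ∀ u v, Adj' u v → Adj u v) : ∀ {u v : V}, DWalk Adj' u v → DWalk Adj u v
  | _, _, .nil => .nil
  | _, _, .cons ha p => .cons (h _ _ ha) (p.mapLe h)

@[simp]
lemma arcs_mapLe (h : ∀ u v, Adj' u v → Adj u v) {u v : V} (p : DWalk Adj' u v) :
    (p.mapLe h).arcs = p.arcs := by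
  induction p with
  | nil => rfl
  | cons _ p ih => simp only [mapLe, arcs, ih]

@[simp]
lemma support_mapLe (h : ∀ u v, Adj' u v → Adj u v) {u v : V} (p : DWalk Adj' u v) :
    (p.mapLe h).support = p.support := by
  induction p with
  | nil => rfl
  | cons _ p ih => simp only [mapLe, support, ih]

lemma isPath_mapLe_iff (h : ∀ u v, Adj' u v → Adj u v) {u v : V} (p : DWalk Adj' u v) :
    (p.mapLe h).IsPath ↔ p.IsPath := by
  simp only [IsPath, support_mapLe]

end DWalk

lemma properlyColoured_mapLe_iff (c : V → V → ℕ) (h : ∀ u v, Adj' u v → Adj u v) {u v : V}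
    (p : DWalk Adj' u v) : ProperlyColoured c (p.mapLe h) ↔ ProperlyColoured c p := by
  simp only [ProperlyColoured, DWalk.arcs_mapLe]

lemma properlyColoured_of_forall_ne {c : V → V → ℕ}
    (hc : ∀ u v w, Adj u v → Adj v w → c u v ≠ c v w) {u v : V} (p : DWalk Adj u v) :
    ProperlyColoured c p := by
  induction p with
  | nil => exact List.isChain_nil
  | cons huv p ih =>
    cases p with
    | nil => exact List.isChain_singleton _
    | cons hvw q => exact ih.cons_cons (hc _ _ _ huv hvw)

open Classical in
noncomputable def tailSideColouring (S : Set V) (u _ : V) : ℕ := if u ∈ S then 1 else 2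

lemma tailSideColouring_mem_Icc (S : Set V) (u v : V) :
    tailSideColouring S u v ∈ Finset.Icc 1 2 := by
  unfold tailSideColouring
  split_ifs <;> simp

lemma properlyColoured_tailSideColouring {V₁ V₂ : Set V} (hdis : Disjoint V₁ V₂)
    (hbip : ∀ u v, Adj u v → (u ∈ V₁ ∧ v ∈ V₂) ∨ (u ∈ V₂ ∧ v ∈ V₁)) {u v : V}
    (p : DWalk Adj u v) : ProperlyColoured (tailSideColouring V₁) p := by
  refine properlyColoured_of_forall_ne (fun u v w huv _ => ?_) p
  have hnot : ∀ {x}, x ∈ V₂ → x ∉ V₁ := fun hx₂ hx₁ => hdis.ne_of_mem hx₁ hx₂ rfl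
  rcases hbip u v huv with ⟨hu, hv⟩ | ⟨hu, hv⟩
  · simp [tailSideColouring, hu, hnot hv]
  · simp [tailSideColouring, hv, hnot hu]

end PCDigraph

open PCDigraph

theorem pc_le_two_of_strong_bipartite_spanning_general {V : Type*} (Adj : V → V → Prop)
    (hsub : ∃ Adj' : V → V → Prop,
      (∀ u v : V, Adj' u v → Adj u v) ∧ Strong Adj' ∧ Bipartite Adj') :
    pc Adj ≤ 2 := by
  obtain ⟨Adj', hle, hstrong, V₁, V₂, -, hdis, hbip⟩ := hsub
  refine Nat.sInf_le ⟨tailSideColouring V₁, fun u v _ => tailSideColouring_mem_Icc V₁ u v,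
    fun u v _ => ?_⟩
  obtain ⟨p, hp⟩ := hstrong u v
  exact ⟨p.mapLe hle, (DWalk.isPath_mapLe_iff hle p).2 hp,
    (properlyColoured_mapLe_iff _ hle p).2 (properlyColoured_tailSideColouring hdis hbip p)⟩

/-- If a digraph `D` contains a spanning subdigraph that is strong and
bipartite, then the proper connection number of `D` is at most `2`. -/
theorem pc_le_two_of_strong_bipartite_spanning {V : Type*} (Adj : V → V → Prop)
    (hloopless : ∀ v : V, ¬ Adj v v)
    (hsub : ∃ Adj' : V → V → Prop,
      (∀ u v : V, Adj' u v → Adj u v) ∧ Strong Adj' ∧ Bipartite Adj') :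
    pc Adj ≤ 2 :=
  pc_le_two_of_strong_bipartite_spanning_general Adj hsub
end

section
/- Let D be a strong digraph. If there is a partition of the vertex set V(D) = V_1 ∪ V_2 with V_1 ∩ V_2 = ∅ such that the induced subdigraph D[V_1] is strong and bipartite, and V_2 is an independent set of vertices (no arc of D joins two vertices of V_2), then the proper connection number of D is at most 2. -/
open PCDigraph

/-!
Colour the arcs so that every vertex of `V₁` alternates: an arc entering `a ∈ V₁` gets the
colour of the side of `a` in the bipartition of `D[V₁]`, and an arc leaving `a` towards `V₂`
gets the other colour. Arcs inside `D[V₁]` then alternate automatically, so every path whose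
internal vertices lie in `V₁` is properly coloured. Such a path joins any two distinct
vertices: as `D` is strong and `V₂` independent, every vertex of `V₂` has an in-neighbour and
an out-neighbour in `V₁`, and these are joined inside the strong digraph `D[V₁]`.
-/
namespace PCDigraph

variable {V : Type*} {Adj : V → V → Prop}

namespace DWalk

def append : ∀ {u v w : V}, DWalk Adj u v → DWalk Adj v w → DWalk Adj u w
  | _, _, _, .nil, q => q
  | _, _, _, .cons h p, q => .cons h (p.append q)

def map {W : Type*} {Adj' : W → W → Prop} (f : V → W)
    (hf : ∀ u v, Adj u v → Adj' (f u) (f v)) :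
    ∀ {u v : V}, DWalk Adj u v → DWalk Adj' (f u) (f v)
  | _, _, .nil => .nil
  | _, _, .cons h p => .cons (hf _ _ h) (p.map f hf)

theorem end_mem_support {u v : V} : ∀ p : DWalk Adj u v, v ∈ p.support
  | .nil => by simp [support]
  | .cons _ p => List.mem_cons_of_mem _ p.end_mem_support

theorem support_append {u v w : V} :
    ∀ (p : DWalk Adj u v) (q : DWalk Adj v w), (p.append q).support = p.support ++ q.support.tail
  | .nil, q => by cases q <;> rfl
  | .cons _ p, q => by simp [append, support, support_append p q]

theorem mem_support_append {u v w x : V} (p : DWalk Adj u v) (q : DWalk Adj v w)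
    (hx : x ∈ (p.append q).support) : x ∈ p.support ∨ x ∈ q.support := by
  rw [support_append, List.mem_append] at hx
  exact hx.imp_right List.mem_of_mem_tail

theorem support_map {W : Type*} {Adj' : W → W → Prop} (f : V → W)
    (hf : ∀ u v, Adj u v → Adj' (f u) (f v)) {u v : V} :
    ∀ p : DWalk Adj u v, (p.map f hf).support = p.support.map f
  | .nil => rfl
  | .cons _ p => by simp [map, support, support_map f hf p]

theorem exists_support_sublist_of_mem {u v w : V} :
    ∀ p : DWalk Adj u v, w ∈ p.support → ∃ q : DWalk Adj w v, q.support.Sublist p.support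
  | .nil, hw => by
      obtain rfl : w = u := by simpa [support] using hw
      exact ⟨.nil, .refl _⟩
  | .cons h p, hw => by
      rcases List.mem_cons.mp hw with rfl | hw
      · exact ⟨.cons h p, .refl _⟩
      · obtain ⟨q, hq⟩ := exists_support_sublist_of_mem p hw
        exact ⟨q, hq.cons _⟩

theorem exists_isPath_support_subset {u v : V} :
    ∀ p : DWalk Adj u v, ∃ q : DWalk Adj u v, q.IsPath ∧ q.support ⊆ p.support
  | .nil => ⟨.nil, by simp [IsPath, support], List.Subset.refl _⟩
  | .cons h p => by
      obtain ⟨q, hq, hqp⟩ := exists_isPath_support_subset p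
      by_cases hu : u ∈ q.support
      · obtain ⟨r, hr⟩ := exists_support_sublist_of_mem q hu
        exact ⟨r, hr.nodup hq,
          List.Subset.trans hr.subset (List.Subset.trans hqp (List.subset_cons_self _ _))⟩
      · exact ⟨.cons h q, List.nodup_cons.mpr ⟨hu, hq⟩, List.cons_subset_cons _ hqp⟩

theorem exists_adj_start_of_ne {u v : V} : DWalk Adj u v → u ≠ v → ∃ w, Adj u w
  | .nil, huv => absurd rfl huv
  | .cons h _, _ => ⟨_, h⟩

theorem exists_adj_end_of_ne {u v : V} : DWalk Adj u v → u ≠ v → ∃ w, Adj w v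
  | .nil, huv => absurd rfl huv
  | .cons (v := a) h p, _ => by
      by_cases hav : a = v
      · exact ⟨_, hav ▸ h⟩
      · exact exists_adj_end_of_ne p hav

end DWalk

theorem properlyColoured_of_isPath {S : Set V} {c : V → V → ℕ}
    (halt : ∀ x a y, a ∈ S → Adj x a → Adj a y → c x a ≠ c a y) {u v : V} :
    ∀ p : DWalk Adj u v, p.IsPath → (∀ w ∈ p.support, w = u ∨ w = v ∨ w ∈ S) →
      ProperlyColoured c p
  | .nil, _, _ => List.isChain_nil
  | .cons _ .nil, _, _ => List.isChain_singleton _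
  | .cons (v := a) hua (.cons (v := b) hab p), hp, hint => by
      obtain ⟨hu, hpath⟩ := List.nodup_cons.mp hp
      have ha : a ∈ S := by
        rcases hint a (by simp [DWalk.support]) with rfl | rfl | ha
        · exact absurd List.mem_cons_self hu
        · exact absurd p.end_mem_support (List.nodup_cons.mp hpath).1
        · exact ha
      have hrest : ProperlyColoured c (.cons hab p) := by
        refine properlyColoured_of_isPath halt _ hpath fun w hw => ?_
        rcases hint w (List.mem_cons_of_mem _ hw) with rfl | hw' | hw'
        · exact absurd hw hu
        · exact Or.inr (Or.inl hw')
        · exact Or.inr (Or.inr hw')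
      exact List.isChain_cons_cons.mpr ⟨halt u a b ha hua hab, hrest⟩

theorem pc_le_of_alternating {k : ℕ} {S : Set V} (c : V → V → ℕ)
    (hc : ∀ u v, Adj u v → c u v ∈ Finset.Icc 1 k)
    (halt : ∀ x a y, a ∈ S → Adj x a → Adj a y → c x a ≠ c a y)
    (hwalk : ∀ u v, u ≠ v →
      ∃ p : DWalk Adj u v, ∀ w ∈ p.support, w = u ∨ w = v ∨ w ∈ S) :
    pc Adj ≤ k := by
  refine Nat.sInf_le ⟨c, hc, fun u v huv => ?_⟩
  obtain ⟨p, hp⟩ := hwalk u v huv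
  obtain ⟨q, hq, hqp⟩ := p.exists_isPath_support_subset
  exact ⟨q, hq, properlyColoured_of_isPath halt q hq fun w hw => hp w (hqp hw)⟩

theorem exists_side_of_bipartite_induced {S : Set V} (h : Bipartite fun a b : S => Adj a b) :
    ∃ side : V → ℕ, (∀ v, side v ∈ Finset.Icc 1 2) ∧
      ∀ a ∈ S, ∀ b ∈ S, Adj a b → side a ≠ side b := by
  classical
  obtain ⟨A, B, -, hAB, hadj⟩ := h
  refine ⟨fun v => if h : v ∈ S then (if ⟨v, h⟩ ∈ A then 1 else 2) else 1,
    fun v => by dsimp only; split_ifs <;> simp, fun a ha b hb hab => ?_⟩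
  rcases hadj ⟨a, ha⟩ ⟨b, hb⟩ hab with ⟨haA, hbB⟩ | ⟨haB, hbA⟩
  · simp [ha, hb, haA, Set.disjoint_right.mp hAB hbB]
  · simp [ha, hb, hbA, Set.disjoint_right.mp hAB haB]

theorem exists_colouring_alternating_of_bipartite_induced {S : Set V}
    (h : Bipartite fun a b : S => Adj a b) :
    ∃ c : V → V → ℕ, (∀ u v, c u v ∈ Finset.Icc 1 2) ∧
      ∀ x a y, a ∈ S → Adj x a → Adj a y → c x a ≠ c a y := by
  classical
  obtain ⟨side, hside, hadj⟩ := exists_side_of_bipartite_induced h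
  refine ⟨fun x y => if y ∈ S then side y else 3 - side x, fun u v => ?_,
    fun x a y ha _ hay => ?_⟩
  · have := hside u
    have := hside v
    simp only [Finset.mem_Icc] at *
    split_ifs <;> omega
  · have := hside a
    simp only [Finset.mem_Icc, if_pos ha] at *
    split_ifs with hy
    · exact hadj a ha y hy hay
    · omega

section VertexCover

variable {S : Set V} (hS : ∀ u v, Adj u v → u ∈ S ∨ v ∈ S)
include hS

theorem exists_walk_to_mem {u v : V} (p : DWalk Adj u v) (huv : u ≠ v) :
    ∃ a ∈ S, ∃ q : DWalk Adj u a, ∀ w ∈ q.support, w = u ∨ w ∈ S := by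
  by_cases hu : u ∈ S
  · exact ⟨u, hu, .nil, by simp [DWalk.support]⟩
  obtain ⟨a, hua⟩ := p.exists_adj_start_of_ne huv
  have ha := (hS u a hua).resolve_left hu
  exact ⟨a, ha, .cons hua .nil, by simp [DWalk.support, ha]⟩

theorem exists_walk_from_mem {u v : V} (p : DWalk Adj u v) (huv : u ≠ v) :
    ∃ b ∈ S, ∃ q : DWalk Adj b v, ∀ w ∈ q.support, w = v ∨ w ∈ S := by
  by_cases hv : v ∈ S
  · exact ⟨v, hv, .nil, by simp [DWalk.support]⟩
  obtain ⟨b, hbv⟩ := p.exists_adj_end_of_ne huv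
  have hb := (hS b v hbv).resolve_right hv
  exact ⟨b, hb, .cons hbv .nil, by simp [DWalk.support, hb]⟩

theorem exists_walk_internal_mem (hstrong : Strong Adj)
    (hstrongS : Strong fun a b : S => Adj a b) {u v : V} (huv : u ≠ v) :
    ∃ p : DWalk Adj u v, ∀ w ∈ p.support, w = u ∨ w = v ∨ w ∈ S := by
  obtain ⟨p, -⟩ := hstrong u v
  obtain ⟨a, ha, p₁, hp₁⟩ := exists_walk_to_mem hS p huv
  obtain ⟨b, hb, p₃, hp₃⟩ := exists_walk_from_mem hS p huv
  obtain ⟨p₂, -⟩ := hstrongS ⟨a, ha⟩ ⟨b, hb⟩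
  let p₂' : DWalk Adj a b := p₂.map Subtype.val fun _ _ h => h
  refine ⟨p₁.append (p₂'.append p₃), fun w hw => ?_⟩
  rcases DWalk.mem_support_append _ _ hw with hw | hw
  · exact (hp₁ w hw).imp_right Or.inr
  rcases DWalk.mem_support_append _ _ hw with hw | hw
  · obtain ⟨x, -, rfl⟩ := List.mem_map.mp ((DWalk.support_map _ _ p₂) ▸ hw)
    exact Or.inr (Or.inr x.2)
  · exact Or.inr (hp₃ w hw)

end VertexCover

end PCDigraph

theorem pc_le_two_of_partition_general {V : Type*} (Adj : V → V → Prop)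
    (hstrong : Strong Adj)
    (V₁ V₂ : Set V) (hcover : V₁ ∪ V₂ = Set.univ)
    (hstrong₁ : Strong (fun a b : V₁ => Adj a.1 b.1))
    (hbip₁ : Bipartite (fun a b : V₁ => Adj a.1 b.1))
    (hind : ∀ u ∈ V₂, ∀ v ∈ V₂, ¬ Adj u v) :
    pc Adj ≤ 2 := by
  have hV₁ : ∀ u v, Adj u v → u ∈ V₁ ∨ v ∈ V₁ := by
    intro u v huv
    by_contra! h
    have hV₂ : ∀ w, w ∉ V₁ → w ∈ V₂ := fun w hw =>
      ((Set.eq_univ_iff_forall.mp hcover) w).resolve_left hw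
    exact hind u (hV₂ u h.1) v (hV₂ v h.2) huv
  obtain ⟨c, hc, halt⟩ := exists_colouring_alternating_of_bipartite_induced hbip₁
  exact pc_le_of_alternating c (fun u v _ => hc u v) halt
    fun u v huv => exists_walk_internal_mem hV₁ hstrong hstrong₁ huv

/-- Let `D` be a strong digraph. If there is a partition `V(D) = V₁ ∪ V₂`,
with `V₁ ∩ V₂ = ∅`, such that the induced subdigraph `D[V₁]` is strong and
bipartite, and `V₂` is an independent set of vertices, then the proper
connection number of `D` is at most `2`. -/
theorem pc_le_two_of_partition {V : Type*} (Adj : V → V → Prop)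
    (hloopless : ∀ v : V, ¬ Adj v v) (hstrong : Strong Adj)
    (V₁ V₂ : Set V) (hcover : V₁ ∪ V₂ = Set.univ) (hdisj : Disjoint V₁ V₂)
    (hstrong₁ : Strong (fun a b : V₁ => Adj a.1 b.1))
    (hbip₁ : Bipartite (fun a b : V₁ => Adj a.1 b.1))
    (hind : ∀ u ∈ V₂, ∀ v ∈ V₂, ¬ Adj u v) :
    pc Adj ≤ 2 :=
  pc_le_two_of_partition_general Adj hstrong V₁ V₂ hcover hstrong₁ hbip₁ hind
end

section
/- Let D be a Hamiltonian digraph of odd order and let C be a Hamiltonian cycle of D. If every vertex of D is the tail of an even chord of C, then the proper connection number of D is at most 2. -/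
open PCDigraph

/-!
Choose for every position `i` of the cycle an even chord `i → h i`. Cutting the cycle at a
suitable vertex `s` and colouring every arc by the parity of the position of its tail
(counted from `s`), the arcs joining vertices of different parity are the arcs of the
Hamiltonian path `s, s + 1, …, s - 1` and the even chords that jump over `s` (since the
order is odd, exactly those change parity). These form a strong spanning bipartite
subdigraph as soon as every cut of the path is jumped over backwards by some chord, and a
cut point `s` with this property exists because `h` has no fixed point.
-/

open Relation

namespace PCDigraph

variable {V : Type*}

namespace DWalk

variable {A B : V → V → Prop}

def mono (hAB : A ≤ B) : ∀ {u v : V}, DWalk A u v → DWalk B u v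
  | _, _, .nil => .nil
  | _, _, .cons h p => .cons (hAB _ _ h) (mono hAB p)

@[simp]
lemma support_mono (hAB : A ≤ B) {u v : V} (p : DWalk A u v) :
    (p.mono hAB).support = p.support := by
  induction p with
  | nil => rfl
  | cons h p ih => simp [mono, support, ih]

@[simp]
lemma arcs_mono (hAB : A ≤ B) {u v : V} (p : DWalk A u v) :
    (p.mono hAB).arcs = p.arcs := by
  induction p with
  | nil => rfl
  | cons h p ih => simp [mono, arcs, ih]

lemma exists_isPath_of_mem_support {u v w : V} (p : DWalk A u w) (hp : p.IsPath)
    (hv : v ∈ p.support) : ∃ q : DWalk A v w, q.IsPath := by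
  induction p with
  | nil =>
    obtain rfl : v = _ := by simpa [support] using hv
    exact ⟨.nil, hp⟩
  | cons h p ih =>
    simp only [support, List.mem_cons] at hv
    rcases hv with rfl | hv
    · exact ⟨_, hp⟩
    · exact ih (List.nodup_cons.mp hp).2 hv

lemma exists_isPath_of_reflTransGen {u v : V} (huv : ReflTransGen A u v) :
    ∃ p : DWalk A u v, p.IsPath := by
  induction huv using ReflTransGen.head_induction_on with
  | refl => exact ⟨.nil, List.nodup_singleton _⟩
  | @head a _ hab _ ih =>
    obtain ⟨p, hp⟩ := ih
    by_cases hmem : a ∈ p.support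
    · exact exists_isPath_of_mem_support p hp hmem
    · exact ⟨.cons hab p, List.nodup_cons.mpr ⟨hmem, hp⟩⟩

end DWalk

lemma properlyColoured_of_forall {A : V → V → Prop} {c : V → V → ℕ}
    (hc : ∀ a b d, A a b → A b d → c a b ≠ c b d) {u v : V} (p : DWalk A u v) :
    ProperlyColoured c p := by
  induction p with
  | nil => exact List.isChain_nil
  | cons hab p ih =>
    cases p with
    | nil => exact List.isChain_singleton _
    | cons hbd q => exact List.isChain_cons_cons.mpr ⟨hc _ _ _ hab hbd, ih⟩

lemma properlyColoured_mono {A B : V → V → Prop} (hAB : A ≤ B)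
    {c : V → V → ℕ} {u v : V} (p : DWalk A u v) :
    ProperlyColoured c (p.mono hAB) ↔ ProperlyColoured c p := by
  simp only [ProperlyColoured, DWalk.arcs_mono]

lemma strong_of_forall_reflTransGen {A : V → V → Prop} (h : ∀ u v, ReflTransGen A u v) :
    Strong A :=
  fun u v => DWalk.exists_isPath_of_reflTransGen (h u v)

lemma hasStrongTwoPartition_of_reflTransGen {Adj : V → V → Prop} (P : V → Prop)
    (h : ∀ u v, ReflTransGen (fun a b => Adj a b ∧ (P a ↔ ¬ P b)) u v) :
    HasStrongTwoPartition Adj := by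
  refine ⟨{v | P v}, {v | P v}ᶜ, Set.union_compl_self _, disjoint_compl_right,
    strong_of_forall_reflTransGen fun u v => ReflTransGen.mono ?_ u v (h u v)⟩
  rintro a b ⟨hab, hP⟩
  exact ⟨hab, by by_cases ha : P a <;> simp_all⟩

/-- Colour each arc by the part containing its tail. -/
theorem pc_le_two_of_hasStrongTwoPartition {Adj : V → V → Prop}
    (hD : HasStrongTwoPartition Adj) : pc Adj ≤ 2 := by
  classical
  obtain ⟨V₁, V₂, -, hdisj, hstrong⟩ := hD
  refine Nat.sInf_le ⟨fun u _ => if u ∈ V₁ then 1 else 2,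
    fun u v _ => by dsimp only; split_ifs <;> simp, fun u v _ => ?_⟩
  obtain ⟨p, hp⟩ := hstrong u v
  refine ⟨p.mono fun _ _ h => h.1, by simpa [DWalk.IsPath] using hp,
    (properlyColoured_mono _ p).mpr (properlyColoured_of_forall ?_ p)⟩
  rintro a b d ⟨-, ⟨ha, hb⟩ | ⟨ha, hb⟩⟩ -
  · simp [ha, Set.disjoint_right.mp hdisj hb]
  · simp [Set.disjoint_right.mp hdisj ha, hb]

end PCDigraph

namespace ZMod

variable {n : ℕ}

lemma val_add_one_of_lt {k : ZMod n} (h : k.val + 1 < n) : (k + 1).val = k.val + 1 := by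
  have h1 : (1 : ZMod n).val = 1 := val_one'' (by omega)
  rw [val_add_of_lt (by rwa [h1]), h1]

lemma add_one_eq_zero_iff_val [NeZero n] {k : ZMod n} : k + 1 = 0 ↔ k.val + 1 = n := by
  refine ⟨fun hk => (Nat.succ_le_of_lt k.val_lt).antisymm (not_lt.mp fun hlt => ?_),
    fun hk => ?_⟩
  · simpa [hk] using val_add_one_of_lt hlt
  · rw [← natCast_zmod_val k, ← Nat.cast_succ, Nat.succ_eq_add_one, hk, natCast_self]

lemma val_add_one_of_ne_zero [NeZero n] {k : ZMod n} (h : k + 1 ≠ 0) :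
    (k + 1).val = k.val + 1 :=
  val_add_one_of_lt ((Nat.succ_le_of_lt k.val_lt).lt_of_ne (mt add_one_eq_zero_iff_val.mpr h))

lemma even_val_add_iff_of_val_add_lt (hn : Odd n) {a d : ZMod n} (hd : Even d.val)
    (h : (a + d).val < a.val) : Even (a + d).val ↔ ¬ Even a.val := by
  have : NeZero n := ⟨hn.pos.ne'⟩
  have hwrap : n ≤ a.val + d.val := by
    by_contra hlt
    rw [val_add_of_lt (not_le.mp hlt)] at h
    omega
  have := val_add_val_of_le hwrap
  obtain ⟨m, rfl⟩ := hn
  obtain ⟨r, hr⟩ := hd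
  simp only [Nat.even_iff]
  omega

end ZMod

namespace PCDigraph

variable {n : ℕ}

def CrossesEveryCutBackward (g : ZMod n → ZMod n) : Prop :=
  ∀ t, 0 < t → t < n → ∃ k : ZMod n, t ≤ k.val ∧ (g k).val < t

/-- The positions `t, …, n - 1`, counted from `s`, form an arc of the cycle closed under `h`. -/
def IsClosedTail (h : ZMod n → ZMod n) (s : ZMod n) (t : ℕ) : Prop :=
  ∀ p, t ≤ (p - s).val → t ≤ (h p - s).val

section ClosedTail

variable [NeZero n] {h : ZMod n → ZMod n}

lemma not_isClosedTail_sub_one (hh : ∀ p, h p ≠ p) (s : ZMod n) :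
    ¬ IsClosedTail h s (n - 1) := by
  intro hcl
  have hval := ZMod.add_one_eq_zero_iff_val.mp (by ring : s - 1 - s + 1 = 0)
  have hhp := hcl (s - 1) (by omega)
  have : h (s - 1) - s + 1 = 0 :=
    ZMod.add_one_eq_zero_iff_val.mpr (by have := (h (s - 1) - s).val_lt; omega)
  exact hh (s - 1) (by linear_combination this)

lemma IsClosedTail.inter {s : ZMod n} {t t₀ : ℕ} (hcl₀ : IsClosedTail h (s + 1) t₀)
    (hcl : IsClosedTail h s t) (ht : 0 < t) (htt₀ : t ≤ t₀ + 1) :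
    IsClosedTail h s (t₀ + 1) := by
  have e : ∀ q, q - s = q - (s + 1) + 1 := fun q => by ring
  intro p hp
  have hhp := hcl p (by omega)
  rw [e] at hp hhp ⊢
  rw [ZMod.val_add_one_of_ne_zero (by rintro h0; simp [h0] at hp)] at hp
  rw [ZMod.val_add_one_of_ne_zero (by rintro h0; simp [h0] at hhp; omega)]
  exact Nat.succ_le_succ (hcl₀ p (by omega))

/-- If every `s` had a closed tail, intersecting those at `s` and `s - 1` would give a shorter
one at `s - 1`; iterating reaches a single vertex, that is, a fixed point of `h`. -/
lemma exists_forall_not_isClosedTail (hh : ∀ p, h p ≠ p) :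
    ∃ s, ∀ t, 0 < t → t < n → ¬ IsClosedTail h s t := by
  by_contra! H
  have short : ∀ m, ∃ s t, m ≤ t ∧ t < n ∧ IsClosedTail h s t := by
    intro m
    induction m with
    | zero =>
      obtain ⟨t, -, htn, hcl⟩ := H 0
      exact ⟨0, t, t.zero_le, htn, hcl⟩
    | succ m ih =>
      obtain ⟨s, t₀, hm, ht₀, hcl₀⟩ := ih
      obtain ⟨t, ht, htn, hcl⟩ := H (s - 1)
      by_cases htt₀ : t₀ < t
      · exact ⟨s - 1, t, by omega, htn, hcl⟩
      have ht₀' : t₀ + 1 < n := by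
        refine lt_of_le_of_ne ht₀ fun hn => not_isClosedTail_sub_one hh s ?_
        rwa [show n - 1 = t₀ by omega]
      rw [← sub_add_cancel s 1] at hcl₀
      exact ⟨s - 1, t₀ + 1, by omega, ht₀', hcl₀.inter hcl ht (by omega)⟩
  obtain ⟨s, t, hnt, htn, -⟩ := short n
  omega

theorem exists_crossesEveryCutBackward_rotate (hh : ∀ p, h p ≠ p) :
    ∃ s, CrossesEveryCutBackward fun k => h (k + s) - s := by
  obtain ⟨s, hs⟩ := exists_forall_not_isClosedTail hh
  refine ⟨s, fun t ht htn => ?_⟩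
  obtain ⟨p, hp, hhp⟩ : ∃ p, t ≤ (p - s).val ∧ (h p - s).val < t := by
    simpa [IsClosedTail] using hs t ht htn
  exact ⟨p - s, hp, by simpa using hhp⟩

end ClosedTail

def crossParity (A : ZMod n → ZMod n → Prop) (a b : ZMod n) : Prop :=
  A a b ∧ (Even a.val ↔ ¬ Even b.val)

section CrossParity

variable [NeZero n] {A : ZMod n → ZMod n → Prop}

lemma reflTransGen_crossParity_of_val_le (hsucc : ∀ k, A k (k + 1)) {k l : ZMod n}
    (hkl : k.val ≤ l.val) : ReflTransGen (crossParity A) k l := by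
  obtain ⟨m, hm⟩ := Nat.exists_eq_add_of_le hkl
  induction m generalizing k with
  | zero => rw [ZMod.val_injective n hm.symm]
  | succ m ih =>
    have hk : k.val + 1 < n := by have := l.val_lt; omega
    have hval := ZMod.val_add_one_of_lt hk
    refine ReflTransGen.head ⟨hsucc k, ?_⟩ (ih (by omega) (by omega))
    rw [hval, Nat.even_add_one, not_not]

lemma reflTransGen_crossParity_zero (hn : Odd n) (hsucc : ∀ k, A k (k + 1))
    {g : ZMod n → ZMod n} (hg : ∀ k, A k (g k)) (heven : ∀ k, Even (g k - k).val)
    (hcut : CrossesEveryCutBackward g) (k : ZMod n) : ReflTransGen (crossParity A) k 0 := by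
  induction hk : k.val using Nat.strong_induction_on generalizing k with
  | _ t ih =>
    rcases Nat.eq_zero_or_pos t with rfl | ht
    · rw [(ZMod.val_eq_zero k).mp hk]
    obtain ⟨p, hp, hgp⟩ := hcut t ht (hk ▸ k.val_lt)
    have hjump : crossParity A p (g p) := by
      have := ZMod.even_val_add_iff_of_val_add_lt hn (a := p) (heven p) (by simpa using by omega)
      rw [add_sub_cancel] at this
      exact ⟨hg p, by tauto⟩
    exact (reflTransGen_crossParity_of_val_le hsucc (hk ▸ hp)).trans
      (.head hjump (ih _ hgp _ rfl))

theorem reflTransGen_crossParity (hn : Odd n) (hsucc : ∀ k, A k (k + 1))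
    {g : ZMod n → ZMod n} (hg : ∀ k, A k (g k)) (heven : ∀ k, Even (g k - k).val)
    (hcut : CrossesEveryCutBackward g) (k l : ZMod n) : ReflTransGen (crossParity A) k l :=
  (reflTransGen_crossParity_zero hn hsucc hg heven hcut k).trans
    (reflTransGen_crossParity_of_val_le hsucc (by simp))

end CrossParity

end PCDigraph

/-- Let `D` be a Hamiltonian digraph of odd order and `C` be a Hamiltonian
cycle of `D`. If every vertex of `D` is the tail of an even chord of `C`, then
the proper connection number of `D` is at most `2`. -/
theorem pc_le_two_of_even_chord_tail {V : Type*} [Fintype V] (Adj : V → V → Prop)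
    (hloopless : ∀ v : V, ¬ Adj v v) (hodd : Odd (Fintype.card V))
    (x : ZMod (Fintype.card V) → V) (hC : IsHamCycle Adj x)
    (hchord : ∀ v : V, ∃ p q : ZMod (Fintype.card V),
      x p = v ∧ IsChord Adj x p q ∧ Even (chordLength (V := V) p q)) :
    pc Adj ≤ 2 := by
  have : NeZero (Fintype.card V) := ⟨hodd.pos.ne'⟩
  have hjump : ∀ i, ∃ j, Adj (x i) (x j) ∧ Even (j - i).val := fun i => by
    obtain ⟨p, q, hp, hpq, hev⟩ := hchord (x i)
    obtain rfl := hC.1.injective hp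
    exact ⟨q, hpq.1, hev⟩
  choose h hAdj hEven using hjump
  obtain ⟨s, hs⟩ := exists_crossesEveryCutBackward_rotate (h := h)
    fun p hp => hloopless (x p) (by simpa [hp] using hAdj p)
  let e : ZMod (Fintype.card V) ≃ V := (Equiv.addRight s).trans (Equiv.ofBijective x hC.1)
  have hreach := reflTransGen_crossParity (A := fun k l => Adj (e k) (e l)) hodd
    (fun k => by simpa [e, add_right_comm] using hC.2 (k + s))
    (fun k => by simpa [e] using hAdj (k + s))
    (fun k => by simpa [sub_sub, add_comm] using hEven (k + s)) hs
  refine pc_le_two_of_hasStrongTwoPartition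
    (hasStrongTwoPartition_of_reflTransGen (fun v => Even (e.symm v).val) fun u v => ?_)
  rw [← e.apply_symm_apply u, ← e.apply_symm_apply v]
  exact (hreach _ _).lift e fun a b hab => by simpa [crossParity, Function.onFun] using hab
end

section
/- If n is odd, S ⊆ {1,...,n-1}, 1 ∈ S, and S contains an even integer, then the proper connection number of the circulant digraph C_n(S) is at most 2. -/
open PCDigraph

/-!
Colour each arc of `C_n(S)` by the parity of the representative in `[0, n)` of its tail. For
an even `s ∈ S` the number `m = n - s` is odd, so the moves `i ↦ i + 1` (below `n - 1`) and
`i ↦ i - m` (an arc of step `s`, taken from `i ≥ m`) both flip that parity, and any walk made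
of such moves is properly coloured. They already connect every ordered pair: from `u`, drop
to the residue of `u` mod `m`, climb to `m`, drop to `0` and climb to `v`. Cutting out the
cycles of this walk leaves a properly coloured path.
-/

open Relation

namespace List

variable {α : Type*} {r : α → α → Prop} {a b : α}

theorem exists_isChain_cons_nodup_of_relationReflTransGen (h : ReflTransGen r a b) :
    ∃ l, IsChain r (a :: l) ∧ getLast (a :: l) (cons_ne_nil _ _) = b ∧ (a :: l).Nodup := by
  refine ReflTransGen.head_induction_on h ⟨[], .singleton _, rfl, nodup_singleton _⟩ ?_
  rintro c d hcd - ⟨l, hchain, hlast, hnodup⟩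
  by_cases hc : c ∈ d :: l
  · -- shortcut the walk at the later visit of `c`
    obtain ⟨L₁, L₂, hsplit⟩ := append_of_mem hc
    have hsuffix : c :: L₂ <:+ d :: l := ⟨L₁, hsplit.symm⟩
    refine ⟨L₂, hchain.suffix hsuffix, ?_, hnodup.sublist hsuffix.sublist⟩
    rw [← hlast]
    simp only [hsplit, getLast_append_of_ne_nil _ (cons_ne_nil _ _)]
  · exact ⟨d :: l, .cons_cons hcd hchain, by rwa [getLast_cons_cons], nodup_cons.2 ⟨hc, hnodup⟩⟩

theorem IsChain.map_zip_ne {β : Type*} {c : α → α → β}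
    (hc : ∀ x y z, r x y → r y z → c x y ≠ c y z) :
    ∀ {a : α} {l : List α}, IsChain r (a :: l) →
      (((a :: l).zip l).map fun e => c e.1 e.2).IsChain (· ≠ ·)
  | _, [], _ => .nil
  | _, [_], _ => .singleton _
  | _, _ :: _ :: _, h => by
    rw [isChain_cons_cons] at h
    exact .cons_cons (hc _ _ _ h.1 (isChain_cons_cons.1 h.2).1) (map_zip_ne hc h.2)

end List

namespace PCDigraph

variable {V : Type*} {Adj : V → V → Prop}

theorem DWalk.exists_of_isChain :
    ∀ {a : V} {l : List V}, (a :: l).IsChain Adj →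
      ∃ p : DWalk Adj a ((a :: l).getLast (List.cons_ne_nil _ _)),
        p.support = a :: l ∧ p.arcs = (a :: l).zip l
  | _, [], _ => ⟨.nil, rfl, rfl⟩
  | _, _ :: _, h => by
    rw [List.isChain_cons_cons] at h
    obtain ⟨p, hsupport, harcs⟩ := exists_of_isChain h.2
    rw [List.getLast_cons_cons]
    exact ⟨.cons h.1 p, by simp [support, hsupport], by simp [arcs, harcs]⟩

theorem pc_le_of_isPCColouring {k : ℕ} {c : V → V → ℕ} (h : IsPCColouring Adj k c) :
    pc Adj ≤ k :=
  Nat.sInf_le ⟨c, h⟩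

theorem isPCColouring_of_subdigraph {H : V → V → Prop} {k : ℕ} {c : V → V → ℕ}
    (hH : ∀ x y, H x y → Adj x y) (hc : ∀ x y, Adj x y → c x y ∈ Finset.Icc 1 k)
    (hproper : ∀ x y z, H x y → H y z → c x y ≠ c y z)
    (hstrong : ∀ u v, ReflTransGen H u v) : IsPCColouring Adj k c := by
  refine ⟨hc, fun u v _ => ?_⟩
  obtain ⟨l, hchain, hlast, hnodup⟩ := List.exists_isChain_cons_nodup_of_relationReflTransGen
    (hstrong u v)
  obtain ⟨p, hsupport, harcs⟩ := DWalk.exists_of_isChain (hchain.imp hH)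
  subst hlast
  refine ⟨p, by rwa [DWalk.IsPath, hsupport], ?_⟩
  unfold ProperlyColoured
  rw [harcs]
  exact hchain.map_zip_ne hproper

def ClimbOrDrop (n m : ℕ) (i j : ZMod n) : Prop :=
  j.val = i.val + 1 ∨ i.val = j.val + m

variable {n m : ℕ}

theorem circulantAdj_of_climbOrDrop [NeZero n] {S : Finset ℕ} (h1 : 1 ∈ S) (hm : n - m ∈ S)
    (hmn : m ≤ n) {i j : ZMod n} (h : ClimbOrDrop n m i j) : circulantAdj n S i j := by
  rcases h with h | h
  · have hj : j = i + 1 := by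
      rw [← ZMod.natCast_zmod_val j, h, Nat.cast_succ, ZMod.natCast_zmod_val]
    exact ⟨1, h1, by rw [hj, Nat.cast_one, add_sub_cancel_left]⟩
  · have hi : i = j + m := by
      rw [← ZMod.natCast_zmod_val i, h, Nat.cast_add, ZMod.natCast_zmod_val]
    exact ⟨n - m, hm, by rw [hi, Nat.cast_sub hmn, ZMod.natCast_self]; ring⟩

theorem ClimbOrDrop.val_mod_two_ne (hm : Odd m) {i j : ZMod n} (h : ClimbOrDrop n m i j) :
    i.val % 2 ≠ j.val % 2 := by
  rw [Nat.odd_iff] at hm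
  rcases h with h | h <;> omega

theorem reflTransGen_climbOrDrop_of_le {a b : ℕ} (hab : a ≤ b) (hb : b < n) :
    ReflTransGen (ClimbOrDrop n m) (a : ZMod n) (b : ZMod n) := by
  induction b, hab using Nat.le_induction with
  | base => exact .refl
  | succ b _ ih =>
    refine (ih (by omega)).tail (Or.inl ?_)
    rw [ZMod.val_cast_of_lt hb, ZMod.val_cast_of_lt (by omega)]

theorem reflTransGen_climbOrDrop_add_mul {r q : ℕ} (h : r + m * q < n) :
    ReflTransGen (ClimbOrDrop n m) ((r + m * q : ℕ) : ZMod n) (r : ZMod n) := by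
  induction q with
  | zero => simpa using .refl
  | succ q ih =>
    refine .head (Or.inr ?_) (ih (by nlinarith))
    rw [ZMod.val_cast_of_lt h, ZMod.val_cast_of_lt (by nlinarith)]
    ring

theorem reflTransGen_climbOrDrop [NeZero n] (hm0 : 0 < m) (hmn : m < n) (u v : ZMod n) :
    ReflTransGen (ClimbOrDrop n m) u v := by
  have to_zero (a : ℕ) (ha : a < n) : ReflTransGen (ClimbOrDrop n m) (a : ZMod n) 0 := by
    have hdrop := reflTransGen_climbOrDrop_add_mul (m := m) (r := a % m) (q := a / m)
      (by rwa [Nat.mod_add_div])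
    rw [Nat.mod_add_div] at hdrop
    have hzero := reflTransGen_climbOrDrop_add_mul (n := n) (m := m) (r := 0) (q := 1) (by omega)
    rw [zero_add, mul_one, Nat.cast_zero] at hzero
    exact hdrop.trans ((reflTransGen_climbOrDrop_of_le (Nat.mod_lt a hm0).le hmn).trans hzero)
  rw [← ZMod.natCast_zmod_val u, ← ZMod.natCast_zmod_val v]
  have hclimb := reflTransGen_climbOrDrop_of_le (m := m) (Nat.zero_le v.val) v.val_lt
  rw [Nat.cast_zero] at hclimb
  exact (to_zero _ u.val_lt).trans hclimb

end PCDigraph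

/-- If `n` is odd, `S ⊆ {1, …, n-1}`, `1 ∈ S`, and `S` contains an even
integer, then the proper connection number of the circulant digraph `C_n(S)`
is at most `2`. -/
theorem pc_circulant_le_two_of_even_elem (n : ℕ) (hodd : Odd n) (S : Finset ℕ)
    (hS : S ⊆ Finset.Icc 1 (n - 1)) (h1 : 1 ∈ S) (heven : ∃ s ∈ S, Even s) :
    pc (circulantAdj n S) ≤ 2 := by
  obtain ⟨s, hsS, hs⟩ := heven
  have hs_mem := Finset.mem_Icc.1 (hS hsS)
  have : NeZero n := ⟨hodd.pos.ne'⟩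
  have hm : Odd (n - s) := Nat.Odd.sub_even (by omega) hodd hs
  refine pc_le_of_isPCColouring (isPCColouring_of_subdigraph (H := ClimbOrDrop n (n - s))
    (c := fun i _ => 1 + i.val % 2) ?_ ?_ ?_ ?_)
  · refine fun _ _ => circulantAdj_of_climbOrDrop h1 ?_ (Nat.sub_le n s)
    rwa [Nat.sub_sub_self (by omega)]
  · intro _ _ _
    simp only [Finset.mem_Icc]
    omega
  · intro _ _ _ hxy _
    simpa using hxy.val_mod_two_ne hm
  · exact reflTransGen_climbOrDrop (by omega) (by omega)
end

section
/- If D is a strong digraph such that the out-degree of every vertex equals its in-degree and the number of arcs of D is even, then the proper-walk connection number of D is at most 2. -/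
open PCDigraph

/-!
Call a permutation `π` of the arcs a transition system if the arc `π e` leaves the head of `e`;
one exists because in-degrees equal out-degrees. If some arc lies outside the `π`-cycle of `e₀`,
strong connectivity yields arcs `a`, `b` with a common tail, `a` inside that cycle and `b`
outside, and `swap a b * π` is again a transition system whose cycles merge those of `a` and
`b`. Hence a transition system maximising the cycle of `e₀` is a single cycle, i.e. an Euler
tour. Colouring the arcs alternately along this tour is consistent because the number of arcs is
even, and the arcs of the tour from an arc leaving `u` to an arc entering `v` form a properly
coloured walk from `u` to `v`.
-/

namespace Equiv.Perm

variable {α : Type*}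

theorem exists_zmod_apply_eq_add_one [Finite α] {π : Perm α} (hπ : ∀ x y, π.SameCycle x y)
    {m : ℕ} (hm : m ∣ Nat.card α) : ∃ χ : α → ZMod m, ∀ x, χ (π x) = χ x + 1 := by
  rcases isEmpty_or_nonempty α with _ | ⟨⟨x₀⟩⟩
  · exact ⟨isEmptyElim, isEmptyElim⟩
  have horbit (x : α) : x ∈ MulAction.orbit (Subgroup.zpowers π) x₀ :=
    let ⟨i, hi⟩ := hπ x₀ x
    ⟨⟨π ^ i, i, rfl⟩, hi⟩
  have hperiod : Function.minimalPeriod (π • ·) x₀ = Nat.card α := by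
    rw [← Nat.card_zmod (Function.minimalPeriod _ _),
      ← Nat.card_congr (MulAction.orbitZPowersEquiv π x₀), Set.eq_univ_of_forall horbit,
      Nat.card_univ]
  let pos (x : α) := MulAction.orbitZPowersEquiv π x₀ ⟨x, horbit x⟩
  refine ⟨fun x => ZMod.castHom (hperiod ▸ hm) _ (pos x), fun x => ?_⟩
  suffices pos (π x) = pos x + 1 by simp only [this, map_add, map_one]
  obtain ⟨n, hn⟩ := ZMod.intCast_surjective (pos x)
  have hx : x = (π ^ n) x₀ := by
    have := congr_arg Subtype.val ((Equiv.eq_symm_apply _).mpr hn.symm)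
    rwa [MulAction.orbitZPowersEquiv_symm_apply'] at this
  rw [← hn, ← Int.cast_one, ← Int.cast_add, ← Equiv.eq_symm_apply,
    MulAction.orbitZPowersEquiv_symm_apply']
  ext
  rw [hx, add_comm, zpow_one_add]
  rfl

variable [DecidableEq α] [Finite α] {π : Perm α} {a b x : α}

theorem SameCycle.swap_mul_of_not_sameCycle (hx : π.SameCycle a x) (hab : ¬π.SameCycle a b) :
    (swap a b * π).SameCycle a x := by
  obtain ⟨n, rfl⟩ := hx.exists_nat_pow_eq
  clear hx
  induction n with
  | zero => rfl
  | succ n ih =>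
    rw [pow_succ', mul_apply]
    by_cases ha : π ((π ^ n) a) = a
    · rw [ha]
    have hb : π ((π ^ n) a) ≠ b := fun hb =>
      hab ⟨(n + 1 : ℕ), by rw [zpow_natCast, pow_succ', mul_apply, hb]⟩
    rw [← swap_apply_of_ne_of_ne ha hb, ← mul_apply]
    exact sameCycle_apply_right.mpr ih

theorem sameCycle_swap_mul_of_not_sameCycle (hab : ¬π.SameCycle a b) :
    (swap a b * π).SameCycle a b := by
  have hpred : π.SameCycle a (π⁻¹ a) := ⟨-1, by simp⟩
  have := sameCycle_apply_right.mpr (hpred.swap_mul_of_not_sameCycle hab)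
  rwa [mul_apply, coe_inv, apply_symm_apply, swap_apply_left] at this

end Equiv.Perm

namespace PCDigraph

open Equiv Equiv.Perm

variable {V : Type*} {Adj : V → V → Prop}

abbrev Arc (Adj : V → V → Prop) := {e : V × V // Adj e.1 e.2}

namespace DWalk

theorem mem_of_adj_mem {S : Set V} (hS : ∀ x y, Adj x y → x ∈ S → y ∈ S) :
    ∀ {u v : V}, DWalk Adj u v → u ∈ S → v ∈ S
  | _, _, .nil, hu => hu
  | _, _, .cons h p, hu => p.mem_of_adj_mem hS (hS _ _ h hu)

theorem exists_adj_left_of_ne {u v : V} (p : DWalk Adj u v) (huv : u ≠ v) : ∃ w, Adj u w := by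
  cases p with
  | nil => exact absurd rfl huv
  | cons h _ => exact ⟨_, h⟩

theorem exists_adj_right_of_ne : ∀ {u v : V}, DWalk Adj u v → u ≠ v → ∃ w, Adj w v
  | _, _, .nil, huv => absurd rfl huv
  | u, v, .cons (v := w) h p, _ => by
    by_cases hwv : w = v
    · exact ⟨u, hwv ▸ h⟩
    · exact p.exists_adj_right_of_ne hwv

end DWalk

def IsTransition (π : Perm (Arc Adj)) : Prop := ∀ e, (π e).1.1 = e.1.2

theorem exists_isTransition [Finite V] (hdeg : ∀ v, outDeg Adj v = inDeg Adj v) :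
    ∃ π : Perm (Arc Adj), IsTransition π := by
  have hcard (v : V) : Nat.card {w // Adj w v} = Nat.card {w // Adj v w} := by
    have := hdeg v
    rwa [outDeg, inDeg, ← Nat.card_coe_set_eq, ← Nat.card_coe_set_eq, eq_comm] at this
  let byHead : Arc Adj ≃ Σ v, {w // Adj w v} :=
    ⟨fun e => ⟨e.1.2, e.1.1, e.2⟩, fun x => ⟨(x.2.1, x.1), x.2.2⟩, fun _ => rfl, fun _ => rfl⟩
  let byTail : Arc Adj ≃ Σ v, {w // Adj v w} :=
    ⟨fun e => ⟨e.1.1, e.1.2, e.2⟩, fun x => ⟨(x.1, x.2.1), x.2.2⟩, fun _ => rfl, fun _ => rfl⟩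
  exact ⟨byHead.trans ((sigmaCongrRight fun v => (Finite.card_eq.mp (hcard v)).some).trans
    byTail.symm), fun _ => rfl⟩

variable {π : Perm (Arc Adj)}

theorem IsTransition.swap_mul [DecidableEq V] (hπ : IsTransition π) {a b : Arc Adj}
    (hab : a.1.1 = b.1.1) : IsTransition (swap a b * π) := by
  intro e
  rw [mul_apply, ← hπ e]
  rcases eq_or_ne (π e) a with ha | ha
  · rw [ha, swap_apply_left, hab]
  rcases eq_or_ne (π e) b with hb | hb
  · rw [hb, swap_apply_right, hab]
  · rw [swap_apply_of_ne_of_ne ha hb]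

theorem IsTransition.exists_tail_eq_sameCycle_not_sameCycle (hπ : IsTransition π)
    (hstrong : Strong Adj) {e₀ b₀ : Arc Adj} (hb₀ : ¬π.SameCycle e₀ b₀) :
    ∃ a b : Arc Adj, a.1.1 = b.1.1 ∧ π.SameCycle e₀ a ∧ ¬π.SameCycle e₀ b := by
  by_contra! h
  let tails : Set V := {v | ∃ a : Arc Adj, a.1.1 = v ∧ π.SameCycle e₀ a}
  have hclosed : ∀ x y, Adj x y → x ∈ tails → y ∈ tails := by
    rintro x y hxy ⟨a, rfl, ha⟩
    exact ⟨π ⟨(a.1.1, y), hxy⟩, hπ _, sameCycle_apply_right.mpr (h a ⟨(a.1.1, y), hxy⟩ rfl ha)⟩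
  obtain ⟨p, -⟩ := hstrong e₀.1.1 b₀.1.1
  obtain ⟨a, ha, he₀a⟩ := p.mem_of_adj_mem hclosed ⟨e₀, rfl, .refl _ _⟩
  exact hb₀ (h a b₀ ha he₀a)

theorem exists_isTransition_forall_sameCycle [Finite V] (hstrong : Strong Adj)
    (hdeg : ∀ v, outDeg Adj v = inDeg Adj v) :
    ∃ π : Perm (Arc Adj), IsTransition π ∧ ∀ e e', π.SameCycle e e' := by
  classical
  obtain ⟨π₀, hπ₀⟩ := exists_isTransition hdeg
  rcases isEmpty_or_nonempty (Arc Adj) with _ | ⟨⟨e₀⟩⟩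
  · exact ⟨π₀, hπ₀, isEmptyElim⟩
  have : Nonempty {π : Perm (Arc Adj) // IsTransition π} := ⟨⟨π₀, hπ₀⟩⟩
  obtain ⟨⟨π, hπ⟩, hmax⟩ := Finite.exists_max fun π : {π : Perm (Arc Adj) // IsTransition π} =>
    {e | π.1.SameCycle e₀ e}.ncard
  suffices ∀ e, π.SameCycle e₀ e from ⟨π, hπ, fun e e' => (this e).symm.trans (this e')⟩
  by_contra! ⟨b₀, hb₀⟩
  obtain ⟨a, b, hab, ha, hb⟩ := hπ.exists_tail_eq_sameCycle_not_sameCycle hstrong hb₀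
  have hab' : ¬π.SameCycle a b := fun h => hb (ha.trans h)
  have hae₀ : (swap a b * π).SameCycle a e₀ := ha.symm.swap_mul_of_not_sameCycle hab'
  have hlt : {e | π.SameCycle e₀ e} ⊂ {e | (swap a b * π).SameCycle e₀ e} :=
    (Set.ssubset_iff_of_subset fun e he =>
        hae₀.symm.trans ((ha.symm.trans he).swap_mul_of_not_sameCycle hab')).mpr
      ⟨b, hae₀.symm.trans (sameCycle_swap_mul_of_not_sameCycle hab'), hb⟩
  exact (Set.ncard_lt_ncard hlt).not_ge (hmax ⟨_, hπ.swap_mul hab⟩)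

theorem IsTransition.exists_properlyColoured_walk_pow (hπ : IsTransition π) {c : V → V → ℕ}
    (hc : ∀ e : Arc Adj, c (π e).1.1 (π e).1.2 ≠ c e.1.1 e.1.2) (n : ℕ) (e : Arc Adj) :
    ∃ p : DWalk Adj e.1.1 ((π ^ n) e).1.2, p.arcs.head? = some e.1 ∧ ProperlyColoured c p := by
  induction n generalizing e with
  | zero => exact ⟨.cons e.2 .nil, rfl, List.isChain_singleton _⟩
  | succ n ih =>
    obtain ⟨p, hhead, hp⟩ := ih (π e)
    rw [pow_succ, mul_apply]
    refine ⟨.cons (hπ e ▸ e.2) p, by simp [DWalk.arcs, hπ e], ?_⟩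
    unfold ProperlyColoured at hp ⊢
    rw [DWalk.arcs, List.map_cons, List.Chain', List.isChain_cons, List.head?_map, hhead]
    refine ⟨?_, hp⟩
    simp only [Option.map_some, Option.mem_def, Option.some.injEq, forall_eq']
    have := (hc e).symm
    rwa [hπ e] at this ⊢

theorem IsTransition.exists_properlyColoured_walk [Finite V] (hπ : IsTransition π)
    {c : V → V → ℕ} (hc : ∀ e : Arc Adj, c (π e).1.1 (π e).1.2 ≠ c e.1.1 e.1.2)
    {e e' : Arc Adj} (hee' : π.SameCycle e e') :
    ∃ p : DWalk Adj e.1.1 e'.1.2, ProperlyColoured c p := by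
  obtain ⟨n, rfl⟩ := hee'.exists_nat_pow_eq
  obtain ⟨p, -, hp⟩ := hπ.exists_properlyColoured_walk_pow hc n e
  exact ⟨p, hp⟩

end PCDigraph

theorem wc_le_two_of_eulerian_even_arcs_general {V : Type*} [Fintype V] (Adj : V → V → Prop)
    (hstrong : Strong Adj)
    (hdeg : ∀ v : V, outDeg Adj v = inDeg Adj v)
    (harcs : Even {e : V × V | Adj e.1 e.2}.ncard) :
    wc Adj ≤ 2 := by
  classical
  obtain ⟨π, hπ, htour⟩ := exists_isTransition_forall_sameCycle hstrong hdeg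
  have heven : 2 ∣ Nat.card (Arc Adj) :=
    Nat.card_coe_set_eq {e : V × V | Adj e.1 e.2} ▸ harcs.two_dvd
  obtain ⟨χ, hχ⟩ := Equiv.Perm.exists_zmod_apply_eq_add_one htour heven
  let c : V → V → ℕ := fun u v => if h : Adj u v then (χ ⟨(u, v), h⟩).val + 1 else 1
  have hc (e : Arc Adj) : c (π e).1.1 (π e).1.2 ≠ c e.1.1 e.1.2 := by
    simp only [c, dif_pos (π e).2, dif_pos e.2, hχ, ne_eq, Nat.add_right_cancel_iff]
    intro h
    simpa using ZMod.val_injective _ h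
  refine Nat.sInf_le ⟨c, fun u v huv => ?_, fun u v huv => ?_⟩
  · simp only [c, dif_pos huv, Finset.mem_Icc]
    have := ZMod.val_lt (χ ⟨(u, v), huv⟩)
    omega
  · obtain ⟨p, -⟩ := hstrong u v
    obtain ⟨w₁, h₁⟩ := p.exists_adj_left_of_ne huv
    obtain ⟨w₂, h₂⟩ := p.exists_adj_right_of_ne huv
    exact hπ.exists_properlyColoured_walk hc (htour ⟨(u, w₁), h₁⟩ ⟨(w₂, v), h₂⟩)

/-- If `D` is a strong digraph such that the out-degree of every vertex equals
its in-degree and the number of arcs of `D` is even, then the proper-walk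
connection number of `D` is at most `2`. -/
theorem wc_le_two_of_eulerian_even_arcs {V : Type*} [Fintype V] (Adj : V → V → Prop)
    (hloopless : ∀ v : V, ¬ Adj v v) (hstrong : Strong Adj)
    (hdeg : ∀ v : V, outDeg Adj v = inDeg Adj v)
    (harcs : Even {e : V × V | Adj e.1 e.2}.ncard) :
    wc Adj ≤ 2 :=
  wc_le_two_of_eulerian_even_arcs_general Adj hstrong hdeg harcs
end

section
/- Every Hamiltonian digraph of even order at least 4 has proper connection number at most 2. -/
/-!
Colour every arc leaving the `i`-th vertex of a Hamiltonian cycle by the parity of `i`. As the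
order `n` is even, parity is a ring homomorphism `ZMod n → ZMod 2`, so the colours alternate all
the way around the cycle, across the wrap-around too, and every segment of the cycle is a
properly coloured path.
-/

namespace PCDigraph

variable {V : Type*} {Adj : V → V → Prop}

lemma DWalk.exists_of_adj_succ (f : ℕ → V) :
    ∀ k : ℕ, (∀ t < k, Adj (f t) (f (t + 1))) →
      ∃ p : DWalk Adj (f 0) (f k), p.support = (List.range (k + 1)).map f ∧
        p.arcs = (List.range k).map fun t => (f t, f (t + 1)) := by
  intro k
  induction k generalizing f with
  | zero => exact fun _ => ⟨.nil, rfl, rfl⟩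
  | succ k ih =>
    intro hadj
    obtain ⟨p, hsupp, harcs⟩ := ih (fun t => f (t + 1)) fun t ht => hadj (t + 1) (by omega)
    refine ⟨.cons (hadj 0 (by omega)) p, ?_, ?_⟩
    · rw [List.range_succ_eq_map, List.map_cons, List.map_map]
      exact congrArg (f 0 :: ·) hsupp
    · rw [List.range_succ_eq_map, List.map_cons, List.map_map]
      exact congrArg ((f 0, f 1) :: ·) harcs

lemma exists_isPath_properlyColoured_of_seq (c : V → V → ℕ) (f : ℕ → V) (k : ℕ)
    (hadj : ∀ t < k, Adj (f t) (f (t + 1)))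
    (hinj : ∀ s ≤ k, ∀ t ≤ k, f s = f t → s = t)
    (hcol : ∀ t, c (f t) (f (t + 1)) ≠ c (f (t + 1)) (f (t + 2))) :
    ∃ p : DWalk Adj (f 0) (f k), p.IsPath ∧ ProperlyColoured c p := by
  obtain ⟨p, hsupp, harcs⟩ := DWalk.exists_of_adj_succ f k hadj
  refine ⟨p, ?_, ?_⟩
  · rw [DWalk.IsPath, hsupp]
    refine List.nodup_range.map_on fun s hs t ht => hinj s ?_ t ?_
    · exact Nat.lt_succ_iff.mp (List.mem_range.mp hs)
    · exact Nat.lt_succ_iff.mp (List.mem_range.mp ht)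
  · rw [ProperlyColoured, harcs, List.map_map]
    cases k with
    | zero => exact List.isChain_nil
    | succ k =>
      exact (List.isChain_map _).mpr ((List.isChain_range_succ _ k).mpr fun t _ => hcol t)

lemma exists_isPath_properlyColoured_of_isHamCycle [Fintype V] {x : ZMod (Fintype.card V) → V}
    (hx : IsHamCycle Adj x) {c : V → V → ℕ}
    (hcol : ∀ i, c (x i) (x (i + 1)) ≠ c (x (i + 1)) (x (i + 1 + 1))) (u v : V) :
    ∃ p : DWalk Adj u v, p.IsPath ∧ ProperlyColoured c p := by
  have : NeZero (Fintype.card V) := ⟨@Fintype.card_ne_zero V _ ⟨x 0⟩⟩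
  obtain ⟨i, rfl⟩ := hx.1.2 u
  obtain ⟨j, rfl⟩ := hx.1.2 v
  have hend : i + ((j - i).val : ZMod (Fintype.card V)) = j := by
    rw [ZMod.natCast_zmod_val]; ring
  have hlt : (j - i).val < Fintype.card V := ZMod.val_lt _
  have key := exists_isPath_properlyColoured_of_seq c (fun t => x (i + t)) (j - i).val
    (fun t _ => by simpa only [Nat.cast_succ, add_assoc] using hx.2 (i + t))
    (fun s hs t ht hst => by
      have := congrArg ZMod.val (add_left_cancel (hx.1.1 hst))
      rwa [ZMod.val_cast_of_lt (by omega), ZMod.val_cast_of_lt (by omega)] at this)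
    (fun t => by
      simpa only [Nat.cast_add, Nat.cast_one, Nat.cast_ofNat, add_assoc, one_add_one_eq_two]
        using hcol (i + t))
  rwa [Nat.cast_zero, add_zero, hend] at key

end PCDigraph

open PCDigraph

theorem pc_le_two_of_hamiltonian_even_order_general {V : Type*} [Fintype V]
    (Adj : V → V → Prop)
    (hham : Hamiltonian Adj) (heven : Even (Fintype.card V)) :
    pc Adj ≤ 2 := by
  obtain ⟨x, hx⟩ := hham
  let parity := ZMod.castHom (even_iff_two_dvd.mp heven) (ZMod 2)
  let index := (Equiv.ofBijective x hx.1).symm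
  let c : V → V → ℕ := fun u _ => (parity (index u)).val + 1
  have hindex (i) : index (x i) = i := Equiv.ofBijective_symm_apply_apply x hx.1 i
  have hflip (a : ZMod 2) : (a + 1).val ≠ a.val := by revert a; decide
  refine Nat.sInf_le ⟨c, fun u _ _ => ?_, fun u v _ => ?_⟩
  · have := ZMod.val_lt (parity (index u))
    simp only [c, Finset.mem_Icc]
    omega
  · refine exists_isPath_properlyColoured_of_isHamCycle hx (fun i => ?_) u v
    simp only [c, hindex, map_add, map_one]
    exact fun h => hflip _ (Nat.succ_injective h).symm

/-- Every Hamiltonian digraph of even order at least `4` has proper connection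
number at most `2`. -/
theorem pc_le_two_of_hamiltonian_even_order {V : Type*} [Fintype V]
    (Adj : V → V → Prop) (hloopless : ∀ v : V, ¬ Adj v v)
    (hham : Hamiltonian Adj) (heven : Even (Fintype.card V))
    (hcard : 4 ≤ Fintype.card V) :
    pc Adj ≤ 2 :=
  pc_le_two_of_hamiltonian_even_order_general Adj hham heven
end
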